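/- arXiv:1201.3610 — 5 statements merged into one kernel-verified Lean document; each statement's English description precedes it below -/
import Mathlib

section
/- Let M, M1, M2 be closed subspaces of a complex Hilbert space H with orthogonal projections Q, Q1, Q2 respectively. Suppose M and M_i are at angle φ_i ∈ [0, π/2), meaning Q_i Q Q_i = (cos φ_i)^2 Q_i and Q Q_i Q = (cos φ_i)^2 Q for i = 1, 2, and suppose Q1 Q2 = Q2 Q1. If φ1 ≠ φ2, then Q1 Q2 = 0 (i.e., M1 and M2 are orthogonal). -/
/-- Lemma: if M is at angle φ₁ with M₁ and at angle φ₂ with M₂, the projections onto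
M₁ and M₂ commute, and φ₁ ≠ φ₂, then M₁ ⊥ M₂. -/
theorem stmt0 {H : Type*} [NormedAddCommGroup H] [InnerProductSpace ℂ H] [CompleteSpace H]
    (Q Q1 Q2 : H →L[ℂ] H)
    (hQsa : IsSelfAdjoint Q) (hQid : Q ∘L Q = Q)
    (hQ1sa : IsSelfAdjoint Q1) (hQ1id : Q1 ∘L Q1 = Q1)
    (hQ2sa : IsSelfAdjoint Q2) (hQ2id : Q2 ∘L Q2 = Q2)
    (φ1 φ2 : ℝ) (hφ1 : φ1 ∈ Set.Ico 0 (Real.pi / 2)) (hφ2 : φ2 ∈ Set.Ico 0 (Real.pi / 2))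
    (hang1a : Q1 ∘L Q ∘L Q1 = ((Real.cos φ1 : ℂ) ^ 2) • Q1)
    (hang1b : Q ∘L Q1 ∘L Q = ((Real.cos φ1 : ℂ) ^ 2) • Q)
    (hang2a : Q2 ∘L Q ∘L Q2 = ((Real.cos φ2 : ℂ) ^ 2) • Q2)
    (hang2b : Q ∘L Q2 ∘L Q = ((Real.cos φ2 : ℂ) ^ 2) • Q)
    (hcomm : Q1 ∘L Q2 = Q2 ∘L Q1)
    (hne : φ1 ≠ φ2) :
    Q1 ∘L Q2 = 0 := by
  set c1 : ℂ := (Real.cos φ1 : ℂ) ^ 2 with hc1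
  set c2 : ℂ := (Real.cos φ2 : ℂ) ^ 2 with hc2
  have hA1 : ∀ x, Q1 (Q (Q1 x)) = c1 • Q1 x := by
    intro x
    have := ContinuousLinearMap.ext_iff.1 hang1a x
    simpa using this
  have hA2 : ∀ x, Q2 (Q (Q2 x)) = c2 • Q2 x := by
    intro x
    have := ContinuousLinearMap.ext_iff.1 hang2a x
    simpa using this
  have hC : ∀ x, Q1 (Q2 x) = Q2 (Q1 x) := by
    intro x
    have := ContinuousLinearMap.ext_iff.1 hcomm x
    simpa using this
  have h1 : ∀ x, Q1 (Q1 x) = Q1 x := by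
    intro x; have := ContinuousLinearMap.ext_iff.1 hQ1id x; simpa using this
  have h2 : ∀ x, Q2 (Q2 x) = Q2 x := by
    intro x; have := ContinuousLinearMap.ext_iff.1 hQ2id x; simpa using this
  have key : ∀ x, c1 • Q1 (Q2 x) = c2 • Q1 (Q2 x) := by
    intro x
    have e2 : Q1 (Q2 (Q (Q2 (Q1 x)))) = c2 • Q1 (Q2 x) := by
      rw [hA2, map_smul, hC, h1, ← hC]
    have e1 : Q1 (Q2 (Q (Q2 (Q1 x)))) = c1 • Q1 (Q2 x) := by
      rw [← hC x, hC (Q (Q1 (Q2 x))), hA1, map_smul, ← hC (Q2 x), h2]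
    rw [← e1, e2]
  have hcne : c1 ≠ c2 := by
    intro h
    apply hne
    have hcos1 : 0 < Real.cos φ1 :=
      Real.cos_pos_of_mem_Ioo ⟨by linarith [hφ1.1, Real.pi_pos], hφ1.2⟩
    have hcos2 : 0 < Real.cos φ2 :=
      Real.cos_pos_of_mem_Ioo ⟨by linarith [hφ2.1, Real.pi_pos], hφ2.2⟩
    have hr : (Real.cos φ1) ^ 2 = (Real.cos φ2) ^ 2 := by
      have := h
      rw [hc1, hc2] at this
      exact_mod_cast this
    have hcc : Real.cos φ1 = Real.cos φ2 := by
      nlinarith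
    have := Real.injOn_cos ⟨hφ1.1, by linarith [hφ1.2, Real.pi_pos]⟩
      ⟨hφ2.1, by linarith [hφ2.2, Real.pi_pos]⟩ hcc
    exact this
  ext x
  have := key x
  have hz : (c1 - c2) • Q1 (Q2 x) = 0 := by
    rw [sub_smul, this, sub_self]
  have := smul_eq_zero.mp hz
  rcases this with h | h
  · exact absurd (sub_eq_zero.mp h) hcne
  · simpa using h
end

section
/- Let K be a complex Hilbert space, A_1, …, A_n positive invertible bounded self-adjoint operators on K, μ_1, …, μ_n > 0 real numbers, and y ∈ K. Then for any u_1, …, u_n ∈ K with Σ_k μ_k u_k = y, one has Σ_k ⟨A_k u_k, u_k⟩ ≥ ⟨(Σ_j μ_j² A_j^{-1})^{-1} y, y⟩. -/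
/-!
Completing the square: for a positive operator `A` with inverse `B`,
`0 ≤ re ⟪A (u - B w), u - B w⟫` gives `2 re ⟪w, u⟫ ≤ re ⟪A u, u⟫ + re ⟪w, B w⟫`.
Taking `w = μ_k v` with `v = (Σ μ_j² A_j⁻¹)⁻¹ y` and summing over `k`, both `Σ re ⟪μ_k v, u_k⟫`
and `Σ re ⟪μ_k v, A_k⁻¹ (μ_k v)⟫` equal `re ⟪v, y⟫`, which is therefore at most `Σ re ⟪A_k u_k, u_k⟫`.
-/

section

open RCLike

open scoped InnerProductSpace

variable {𝕜 E : Type*} [RCLike 𝕜] [NormedAddCommGroup E] [InnerProductSpace 𝕜 E]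

theorem ContinuousLinearMap.IsPositive.two_mul_re_inner_le_of_comp_eq_one
    {A B : E →L[𝕜] E} (hA : A.IsPositive) (hAB : A ∘L B = 1) (u w : E) :
    2 * re ⟪w, u⟫_𝕜 ≤ re ⟪A u, u⟫_𝕜 + re ⟪w, B w⟫_𝕜 := by
  have hABw : A (B w) = w := by simpa using DFunLike.congr_fun hAB w
  have hsq := hA.re_inner_nonneg_left (u - B w)
  rw [map_sub, hABw, inner_sub_left, inner_sub_right, inner_sub_right,
    hA.inner_left_eq_inner_right u (B w), hABw] at hsq
  simp only [map_sub] at hsq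
  linarith [inner_re_symm (𝕜 := 𝕜) u w]

theorem re_inner_le_sum_re_inner_of_sum_smul_eq {ι : Type*} [Fintype ι]
    {A B : ι → E →L[𝕜] E} (hA : ∀ k, (A k).IsPositive) (hAB : ∀ k, A k ∘L B k = 1)
    (c : ι → ℝ) {v y : E} (hv : (∑ j, ((c j : 𝕜) ^ 2) • B j) v = y)
    (u : ι → E) (hu : ∑ k, (c k : 𝕜) • u k = y) :
    re ⟪v, y⟫_𝕜 ≤ ∑ k, re ⟪A k (u k), u k⟫_𝕜 := by
  have hlin : ∑ k, re ⟪(c k : 𝕜) • v, u k⟫_𝕜 = re ⟪v, y⟫_𝕜 := by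
    simp [← hu, inner_sum, inner_smul_left, inner_smul_right, map_sum]
  have hquad : ∑ k, re ⟪(c k : 𝕜) • v, B k ((c k : 𝕜) • v)⟫_𝕜 = re ⟪v, y⟫_𝕜 := by
    simp only [← hv, sum_apply, smul_apply, inner_sum,
      map_smul, inner_smul_left, inner_smul_right, conj_ofReal, map_sum, mul_re, ofReal_re,
      ofReal_im, zero_mul, sub_zero, re_ofReal_pow, im_ofReal_pow]
    exact Finset.sum_congr rfl fun k _ => by ring
  have hsum := Finset.sum_le_sum fun k (_ : k ∈ Finset.univ) =>
    (hA k).two_mul_re_inner_le_of_comp_eq_one (hAB k) (u k) ((c k : 𝕜) • v)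
  rw [← Finset.mul_sum, Finset.sum_add_distrib, hlin, hquad] at hsum
  linarith

end

theorem stmt1_general {K : Type*} [NormedAddCommGroup K] [InnerProductSpace ℂ K]
    (n : ℕ) (A Ainv : Fin n → K →L[ℂ] K) (μ : Fin n → ℝ) (y : K)
    (hA : ∀ k, (A k).IsPositive)
    (hAinv : ∀ k, (A k) ∘L (Ainv k) = 1 ∧ (Ainv k) ∘L (A k) = 1)
    (Tinv : K →L[ℂ] K)
    (hTinv : (∑ j, ((μ j : ℂ) ^ 2) • Ainv j) ∘L Tinv = 1 ∧
             Tinv ∘L (∑ j, ((μ j : ℂ) ^ 2) • Ainv j) = 1)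
    (u : Fin n → K) (hu : ∑ k, (μ k : ℂ) • u k = y) :
    ((inner ℂ (Tinv y) y : ℂ)).re ≤ ∑ k, ((inner ℂ ((A k) (u k)) (u k) : ℂ)).re :=
  re_inner_le_sum_re_inner_of_sum_smul_eq hA (fun k => (hAinv k).1) μ
    (by simpa using DFunLike.congr_fun hTinv.1 y) u hu

/-- Minimization lemma: lower bound for Σ⟨A_k u_k, u_k⟩ under Σ μ_k u_k = y. -/
theorem stmt1 {K : Type*} [NormedAddCommGroup K] [InnerProductSpace ℂ K] [CompleteSpace K]
    (n : ℕ) (A Ainv : Fin n → K →L[ℂ] K) (μ : Fin n → ℝ) (y : K)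
    (hA : ∀ k, (A k).IsPositive)
    (hAinv : ∀ k, (A k) ∘L (Ainv k) = 1 ∧ (Ainv k) ∘L (A k) = 1)
    (hAc : ∀ k, ∃ c : ℝ, 0 < c ∧ ∀ x : K, c * ‖x‖ ^ 2 ≤ ((inner ℂ ((A k) x) x : ℂ)).re)
    (hμ : ∀ k, 0 < μ k)
    (Tinv : K →L[ℂ] K)
    (hTinv : (∑ j, ((μ j : ℂ) ^ 2) • Ainv j) ∘L Tinv = 1 ∧
             Tinv ∘L (∑ j, ((μ j : ℂ) ^ 2) • Ainv j) = 1)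
    (u : Fin n → K) (hu : ∑ k, (μ k : ℂ) • u k = y) :
    ((inner ℂ (Tinv y) y : ℂ)).re ≤ ∑ k, ((inner ℂ ((A k) (u k)) (u k) : ℂ)).re :=
  stmt1_general n A Ainv μ y hA hAinv Tinv hTinv u hu
end

section
/- Let K be a complex Hilbert space, A_1, …, A_n positive invertible bounded self-adjoint operators on K, μ_1, …, μ_n > 0, and y ∈ K. Define u_k = μ_k A_k^{-1} (Σ_j μ_j² A_j^{-1})^{-1} y. Then Σ_k μ_k u_k = y and Σ_k ⟨A_k u_k, u_k⟩ = ⟨(Σ_j μ_j² A_j^{-1})^{-1} y, y⟩. -/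
open scoped InnerProductSpace ComplexConjugate

section

variable {𝕜 E : Type*} [RCLike 𝕜] [NormedAddCommGroup E] [InnerProductSpace 𝕜 E]

theorem ContinuousLinearMap.inner_apply_smul_of_comp_eq_one {A B : E →L[𝕜] E} (hAB : A ∘L B = 1)
    {μ : 𝕜} (hμ : conj μ = μ) (x : E) :
    ⟪A (μ • B x), μ • B x⟫_𝕜 = ⟪x, (μ ^ 2 • B) x⟫_𝕜 := by
  have hABx : A (B x) = x := by simpa using congrArg (· x) hAB
  simp only [map_smul, hABx, inner_smul_left, inner_smul_right, _root_.smul_apply, hμ]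
  ring

theorem ContinuousLinearMap.sum_inner_apply_smul_of_comp_eq_one {ι : Type*} (s : Finset ι)
    {A B : ι → E →L[𝕜] E} (hAB : ∀ k, A k ∘L B k = 1) {μ : ι → 𝕜} (hμ : ∀ k, conj (μ k) = μ k)
    (x : E) :
    ∑ k ∈ s, ⟪A k (μ k • B k x), μ k • B k x⟫_𝕜 = ⟪x, (∑ k ∈ s, μ k ^ 2 • B k) x⟫_𝕜 := by
  simp only [inner_apply_smul_of_comp_eq_one (hAB _) (hμ _), _root_.sum_apply, inner_sum]

end

theorem ContinuousLinearMap.sum_smul_smul_apply {R M ι : Type*} [CommSemiring R]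
    [TopologicalSpace M] [AddCommMonoid M] [Module R M] [ContinuousAdd M]
    [ContinuousConstSMul R M] (s : Finset ι) (B : ι → M →L[R] M) (c : ι → R) (x : M) :
    ∑ k ∈ s, c k • c k • B k x = (∑ k ∈ s, c k ^ 2 • B k) x := by
  simp only [_root_.sum_apply, _root_.smul_apply, smul_smul, sq]

theorem stmt2_general {K : Type*} [NormedAddCommGroup K] [InnerProductSpace ℂ K]
    (n : ℕ) (A Ainv : Fin n → K →L[ℂ] K) (μ : Fin n → ℝ) (y : K)
    (hAinv : ∀ k, (A k) ∘L (Ainv k) = 1 ∧ (Ainv k) ∘L (A k) = 1)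
    (Tinv : K →L[ℂ] K)
    (hTinv : (∑ j, ((μ j : ℂ) ^ 2) • Ainv j) ∘L Tinv = 1 ∧
             Tinv ∘L (∑ j, ((μ j : ℂ) ^ 2) • Ainv j) = 1)
    (u : Fin n → K) (hu : ∀ k, u k = (μ k : ℂ) • (Ainv k) (Tinv y)) :
    (∑ k, (μ k : ℂ) • u k = y) ∧
      ∑ k, ((inner ℂ ((A k) (u k)) (u k) : ℂ)).re = ((inner ℂ (Tinv y) y : ℂ)).re := by
  simp only [hu]
  have hTy : (∑ j, ((μ j : ℂ) ^ 2) • Ainv j) (Tinv y) = y := by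
    simpa using congrArg (· y) hTinv.1
  refine ⟨by rw [ContinuousLinearMap.sum_smul_smul_apply, hTy], ?_⟩
  rw [← Complex.re_sum, ContinuousLinearMap.sum_inner_apply_smul_of_comp_eq_one _
    (fun k => (hAinv k).1) (fun k => Complex.conj_ofReal (μ k)), hTy]

/-- The minimizer u_k = μ_k A_k⁻¹ (Σ μ_j² A_j⁻¹)⁻¹ y satisfies the constraint and
attains the minimum value. -/
theorem stmt2 {K : Type*} [NormedAddCommGroup K] [InnerProductSpace ℂ K] [CompleteSpace K]
    (n : ℕ) (A Ainv : Fin n → K →L[ℂ] K) (μ : Fin n → ℝ) (y : K)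
    (hA : ∀ k, (A k).IsPositive)
    (hAinv : ∀ k, (A k) ∘L (Ainv k) = 1 ∧ (Ainv k) ∘L (A k) = 1)
    (hAc : ∀ k, ∃ c : ℝ, 0 < c ∧ ∀ x : K, c * ‖x‖ ^ 2 ≤ ((inner ℂ ((A k) x) x : ℂ)).re)
    (hμ : ∀ k, 0 < μ k)
    (Tinv : K →L[ℂ] K)
    (hTinv : (∑ j, ((μ j : ℂ) ^ 2) • Ainv j) ∘L Tinv = 1 ∧
             Tinv ∘L (∑ j, ((μ j : ℂ) ^ 2) • Ainv j) = 1)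
    (u : Fin n → K) (hu : ∀ k, u k = (μ k : ℂ) • (Ainv k) (Tinv y)) :
    (∑ k, (μ k : ℂ) • u k = y) ∧
      ∑ k, ((inner ℂ ((A k) (u k)) (u k) : ℂ)).re = ((inner ℂ (Tinv y) y : ℂ)).re :=
  stmt2_general n A Ainv μ y hAinv Tinv hTinv u hu
end

section
/- Let K be a complex Hilbert space, A_1, …, A_n positive invertible bounded self-adjoint operators on K, μ_1, …, μ_n > 0, and y ∈ K. If u_1, …, u_n ∈ K satisfy Σ_k μ_k u_k = y and Σ_k ⟨A_k u_k, u_k⟩ = ⟨(Σ_j μ_j² A_j^{-1})^{-1} y, y⟩, then u_k = μ_k A_k^{-1} (Σ_j μ_j² A_j^{-1})^{-1} y for every k. -/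
/-!
Put `z = Tinv y` and `v k = μ k • Ainv k z`, so that `A k (v k) = μ k • z` and `∑ μ k • v k = y`.
Since every `A k v k` is a real multiple of the same vector `z`, the cross terms in the energy
of `v + w` add up to `re ⟪z, ∑ μ k • w k⟫`, which vanishes when `∑ μ k • w k = 0`. Hence the energy
of any admissible `u` is the energy of `v`, namely `re ⟪z, y⟫`, plus the energy of `u - v`;
so an admissible `u` of energy `re ⟪z, y⟫` has `u - v` of energy zero, and positive definiteness
gives `u = v`.
-/

open scoped InnerProductSpace

section Energy

variable {𝕜 E ι : Type*} [RCLike 𝕜] [NormedAddCommGroup E] [InnerProductSpace 𝕜 E]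
  [Fintype ι]

theorem sum_inner_ofReal_smul (μ : ι → ℝ) (z : E) (x : ι → E) :
    ∑ k, ⟪(μ k : 𝕜) • z, x k⟫_𝕜 = ⟪z, ∑ k, (μ k : 𝕜) • x k⟫_𝕜 := by
  simp only [inner_sum, inner_smul_left, inner_smul_right, RCLike.conj_ofReal]

theorem LinearMap.IsSymmetric.re_inner_map_add_add {T : E →ₗ[𝕜] E} (hT : T.IsSymmetric)
    (v w : E) :
    RCLike.re ⟪T (v + w), v + w⟫_𝕜 =
      RCLike.re ⟪T v, v⟫_𝕜 + 2 * RCLike.re ⟪T v, w⟫_𝕜 + RCLike.re ⟪T w, w⟫_𝕜 := by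
  have hcross : RCLike.re ⟪T w, v⟫_𝕜 = RCLike.re ⟪T v, w⟫_𝕜 := by
    rw [hT w v, ← inner_conj_symm, RCLike.conj_re]
  simp only [map_add, inner_add_left, inner_add_right, hcross]
  ring

theorem sum_re_inner_map_self_eq_add {A : ι → E →ₗ[𝕜] E} (hA : ∀ k, (A k).IsSymmetric)
    (μ : ι → ℝ) (z : E) {u v : ι → E} (hv : ∀ k, A k (v k) = (μ k : 𝕜) • z)
    (huv : ∑ k, (μ k : 𝕜) • u k = ∑ k, (μ k : 𝕜) • v k) :
    ∑ k, RCLike.re ⟪A k (u k), u k⟫_𝕜 =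
      ∑ k, RCLike.re ⟪A k (v k), v k⟫_𝕜 + ∑ k, RCLike.re ⟪A k (u k - v k), u k - v k⟫_𝕜 := by
  have hw : ∑ k, (μ k : 𝕜) • (u k - v k) = 0 := by
    simp only [smul_sub, Finset.sum_sub_distrib, huv, sub_self]
  have hcross : ∑ k, RCLike.re ⟪A k (v k), u k - v k⟫_𝕜 = 0 := by
    rw [← map_sum, Finset.sum_congr rfl fun k _ => by rw [hv k], sum_inner_ofReal_smul, hw,
      inner_zero_right, map_zero]
  conv_lhs => enter [2, k]; rw [← add_sub_cancel (v k) (u k)]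
  simp only [fun k => (hA k).re_inner_map_add_add (v k) (u k - v k), Finset.sum_add_distrib,
    ← Finset.mul_sum, hcross, mul_zero, add_zero]

theorem re_inner_map_self_pos_of_coercive {T : E →L[𝕜] E} {c : ℝ} (hc : 0 < c)
    (hT : ∀ x, c * ‖x‖ ^ 2 ≤ RCLike.re ⟪T x, x⟫_𝕜) {x : E} (hx : x ≠ 0) :
    0 < RCLike.re ⟪T x, x⟫_𝕜 :=
  (mul_pos hc (pow_pos (norm_pos_iff.mpr hx) 2)).trans_le (hT x)

theorem eq_zero_of_sum_re_inner_map_self_eq_zero {A : ι → E →L[𝕜] E}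
    (hA : ∀ k x, x ≠ 0 → 0 < RCLike.re ⟪A k x, x⟫_𝕜) {w : ι → E}
    (hw : ∑ k, RCLike.re ⟪A k (w k), w k⟫_𝕜 = 0) (k : ι) : w k = 0 := by
  have hnonneg : ∀ j, 0 ≤ RCLike.re ⟪A j (w j), w j⟫_𝕜 := fun j => by
    by_cases hj : w j = 0
    · simp [hj]
    · exact (hA j _ hj).le
  by_contra hk
  exact (hA k _ hk).ne' ((Finset.sum_eq_zero_iff_of_nonneg fun j _ => hnonneg j).mp hw k
    (Finset.mem_univ k))

end Energy

theorem stmt3_general {K : Type*} [NormedAddCommGroup K] [InnerProductSpace ℂ K]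
    (n : ℕ) (A Ainv : Fin n → K →L[ℂ] K) (μ : Fin n → ℝ) (y : K)
    (hA : ∀ k, (A k).IsPositive)
    (hAinv : ∀ k, (A k) ∘L (Ainv k) = 1 ∧ (Ainv k) ∘L (A k) = 1)
    (hAc : ∀ k, ∃ c : ℝ, 0 < c ∧ ∀ x : K, c * ‖x‖ ^ 2 ≤ ((inner ℂ ((A k) x) x : ℂ)).re)
    (Tinv : K →L[ℂ] K)
    (hTinv : (∑ j, ((μ j : ℂ) ^ 2) • Ainv j) ∘L Tinv = 1 ∧
             Tinv ∘L (∑ j, ((μ j : ℂ) ^ 2) • Ainv j) = 1)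
    (u : Fin n → K) (hu : ∑ k, (μ k : ℂ) • u k = y)
    (hmin : ∑ k, ((inner ℂ ((A k) (u k)) (u k) : ℂ)).re = ((inner ℂ (Tinv y) y : ℂ)).re) :
    ∀ k, u k = (μ k : ℂ) • (Ainv k) (Tinv y) := by
  set v : Fin n → K := fun k => (μ k : ℂ) • Ainv k (Tinv y)
  have hAv : ∀ k, A k (v k) = (μ k : ℂ) • Tinv y := fun k => by
    rw [map_smul]
    exact congrArg _ (DFunLike.congr_fun (hAinv k).1 _)
  have hv : ∑ k, (μ k : ℂ) • v k = y :=
    calc ∑ k, (μ k : ℂ) • v k = (∑ j, ((μ j : ℂ) ^ 2) • Ainv j) (Tinv y) := by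
          simp only [v, smul_smul, sq, sum_apply, smul_apply]
      _ = y := DFunLike.congr_fun hTinv.1 y
  have henergy_v : ∑ k, (inner ℂ (A k (v k)) (v k) : ℂ).re = (inner ℂ (Tinv y) y : ℂ).re := by
    rw [← Complex.re_sum, Finset.sum_congr rfl fun k _ => by rw [hAv k]]
    exact congrArg Complex.re
      ((sum_inner_ofReal_smul (𝕜 := ℂ) μ (Tinv y) v).trans (congrArg _ hv))
  have henergy_diff : ∑ k, (inner ℂ (A k (u k - v k)) (u k - v k) : ℂ).re = 0 := by
    have hsplit := sum_re_inner_map_self_eq_add (𝕜 := ℂ) (fun k => (hA k).isSymmetric) μ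
      (Tinv y) hAv (hu.trans hv.symm)
    simpa only [RCLike.re_to_complex, ContinuousLinearMap.coe_coe, hmin, henergy_v,
      left_eq_add] using hsplit
  intro k
  refine sub_eq_zero.mp (eq_zero_of_sum_re_inner_map_self_eq_zero (𝕜 := ℂ) (A := A)
    (w := fun j => u j - v j) (fun j x hx => ?_) henergy_diff k)
  obtain ⟨c, hc, hcoer⟩ := hAc j
  exact re_inner_map_self_pos_of_coercive hc hcoer hx

/-- Uniqueness of the minimizer in the minimization lemma. -/
theorem stmt3 {K : Type*} [NormedAddCommGroup K] [InnerProductSpace ℂ K] [CompleteSpace K]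
    (n : ℕ) (A Ainv : Fin n → K →L[ℂ] K) (μ : Fin n → ℝ) (y : K)
    (hA : ∀ k, (A k).IsPositive)
    (hAinv : ∀ k, (A k) ∘L (Ainv k) = 1 ∧ (Ainv k) ∘L (A k) = 1)
    (hAc : ∀ k, ∃ c : ℝ, 0 < c ∧ ∀ x : K, c * ‖x‖ ^ 2 ≤ ((inner ℂ ((A k) x) x : ℂ)).re)
    (hμ : ∀ k, 0 < μ k)
    (Tinv : K →L[ℂ] K)
    (hTinv : (∑ j, ((μ j : ℂ) ^ 2) • Ainv j) ∘L Tinv = 1 ∧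
             Tinv ∘L (∑ j, ((μ j : ℂ) ^ 2) • Ainv j) = 1)
    (u : Fin n → K) (hu : ∑ k, (μ k : ℂ) • u k = y)
    (hmin : ∑ k, ((inner ℂ ((A k) (u k)) (u k) : ℂ)).re = ((inner ℂ (Tinv y) y : ℂ)).re) :
    ∀ k, u k = (μ k : ℂ) • (Ainv k) (Tinv y) :=
  stmt3_general n A Ainv μ y hA hAinv hAc Tinv hTinv u hu hmin
end

section
/- Let H_0 be a complex Hilbert space, m, r ≥ 0 integers with m + r ≥ 1, τ_1, …, τ_{m+r} ∈ (0,1), and Q_1, …, Q_m orthogonal projections on H_0. Define the operator B on the direct sum of (2m + r + 1) copies of H_0 by the block matrix whose first row and column have blocks τ_k I coupling the first coordinate to each of the pairs (x_k, y_k) (both with coefficient τ_k, 1 ≤ k ≤ m) and to each v_k (with coefficient τ_{m+k}, 1 ≤ k ≤ r), with identity diagonal blocks, off-diagonal blocks Q_k between the coordinates x_k and y_k (in both directions), and all other blocks zero. Then B is nonnegative if and only if Σ_{k=1}^m τ_k² R_k ≤ ξ(τ)·I, where R_k = I − Q_k and ξ(τ) = 1 − Σ_{k=1}^{m+r} τ_k².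 -/
/-!
Write `R_k = 1 - Q_k` and `S = Σ τ_k²`. Minimising over `z`, `B ≥ 0` iff `‖z₀‖² ≤ D(x, y, v)` for
all `(x, y, v)`, where `D` is the part of the form not involving `z`. As `Q_k` is an orthogonal
projection, `‖x‖² + ‖y‖² + 2 Re⟨Q_k x, y⟩ = ‖Q_k (x + y)‖² + ‖R_k x‖² + ‖R_k y‖²`, and completing
the squares against an arbitrary `w` gives `D ≥ 2 Re⟨z₀, w⟩ - S ‖w‖² - Σ τ_k² ‖R_k w‖²`, with
equality for `x_k = y_k = (τ_k / 2) (w + R_k w)`, `v_k = τ_{m+k} w`. Taking `w = z₀` gives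
sufficiency. For the equality choice, `u = z₀` satisfies
`‖u‖² ≤ Re⟨u, w⟩ = S ‖w‖² + Σ τ_k² ‖R_k w‖²`, and Cauchy–Schwarz turns this into
`Re⟨u, w⟩ ≤ ‖w‖²`, which is necessity.
-/

open RCLike Finset
open scoped InnerProductSpace

section InnerProduct

variable {𝕜 E : Type*} [RCLike 𝕜] [NormedAddCommGroup E] [InnerProductSpace 𝕜 E]

theorem forall_norm_sq_add_two_re_inner_add_nonneg_iff (u : E) (g : ℝ) :
    (∀ z : E, 0 ≤ ‖z‖ ^ 2 + 2 * re ⟪z, u⟫_𝕜 + g) ↔ ‖u‖ ^ 2 ≤ g := by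
  have key : ∀ z : E, ‖z‖ ^ 2 + 2 * re ⟪z, u⟫_𝕜 = ‖z + u‖ ^ 2 - ‖u‖ ^ 2 := fun z => by
    rw [norm_add_sq (𝕜 := 𝕜)]; ring
  simp only [key]
  refine ⟨fun h => by simpa using h (-u), fun h z => by nlinarith [sq_nonneg ‖z + u‖]⟩

theorem two_mul_re_inner_sub_le_norm_sq (a b : E) (t : ℝ) :
    2 * t * re ⟪a, b⟫_𝕜 - t ^ 2 * ‖b‖ ^ 2 ≤ ‖a‖ ^ 2 := by
  have h := norm_sub_sq (𝕜 := 𝕜) a ((t : 𝕜) • b)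
  rw [inner_smul_right, re_ofReal_mul, norm_smul, norm_ofReal, mul_pow, sq_abs] at h
  nlinarith [sq_nonneg ‖a - (t : 𝕜) • b‖]

theorem re_inner_le_norm_sq_of_norm_sq_le_re_inner {u w : E} (h : ‖u‖ ^ 2 ≤ re ⟪u, w⟫_𝕜) :
    re ⟪u, w⟫_𝕜 ≤ ‖w‖ ^ 2 := by
  have hcs := re_inner_le_norm (𝕜 := 𝕜) u w
  have : ‖u‖ ≤ ‖w‖ := by nlinarith [norm_nonneg u, norm_nonneg w]
  nlinarith [norm_nonneg u]

theorem ofReal_half_smul_add_self (t : ℝ) (u : E) :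
    ((t / 2 : ℝ) : 𝕜) • u + ((t / 2 : ℝ) : 𝕜) • u = (t : 𝕜) • u := by
  rw [← add_smul, ← ofReal_add, add_halves]

end InnerProduct

namespace IsStarProjection

variable {𝕜 E : Type*} [RCLike 𝕜] [NormedAddCommGroup E] [InnerProductSpace 𝕜 E] [CompleteSpace E]
  {p : E →L[𝕜] E}

theorem inner_apply_left (hp : IsStarProjection p) (x y : E) : ⟪p x, y⟫_𝕜 = ⟪x, p y⟫_𝕜 :=
  hp.isSelfAdjoint.isSymmetric x y

theorem apply_apply (hp : IsStarProjection p) (x : E) : p (p x) = p x :=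
  congrArg (· x) hp.isIdempotentElem.eq

theorem inner_apply_apply (hp : IsStarProjection p) (x y : E) : ⟪p x, p y⟫_𝕜 = ⟪x, p y⟫_𝕜 := by
  rw [hp.inner_apply_left, hp.apply_apply]

theorem inner_eq_add_inner_one_sub (hp : IsStarProjection p) (x y : E) :
    ⟪x, y⟫_𝕜 = ⟪p x, p y⟫_𝕜 + ⟪(1 - p) x, (1 - p) y⟫_𝕜 := by
  rw [hp.inner_apply_apply, hp.one_sub.inner_apply_apply, ← inner_add_right]
  simp

theorem norm_sq_eq_add_norm_sq_one_sub (hp : IsStarProjection p) (x : E) :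
    ‖x‖ ^ 2 = ‖p x‖ ^ 2 + ‖(1 - p) x‖ ^ 2 := by
  simp only [← inner_self_eq_norm_sq (𝕜 := 𝕜), hp.inner_eq_add_inner_one_sub x x, map_add]

theorem re_inner_apply_self (hp : IsStarProjection p) (x : E) : re ⟪p x, x⟫_𝕜 = ‖p x‖ ^ 2 := by
  rw [← inner_self_eq_norm_sq (𝕜 := 𝕜), hp.inner_apply_apply, inner_re_symm]

theorem norm_sq_add_norm_sq_add_two_re_inner (hp : IsStarProjection p) (x y : E) :
    ‖x‖ ^ 2 + ‖y‖ ^ 2 + 2 * re ⟪p x, y⟫_𝕜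
      = ‖p (x + y)‖ ^ 2 + ‖(1 - p) x‖ ^ 2 + ‖(1 - p) y‖ ^ 2 := by
  have hxy : ⟪p x, y⟫_𝕜 = ⟪p x, p y⟫_𝕜 := by
    rw [hp.inner_apply_apply, hp.inner_apply_left]
  rw [map_add, norm_add_sq (𝕜 := 𝕜), hxy, hp.norm_sq_eq_add_norm_sq_one_sub x,
    hp.norm_sq_eq_add_norm_sq_one_sub y]
  ring

theorem two_mul_re_inner_sub_le (hp : IsStarProjection p) (t : ℝ) (x y w : E) :
    2 * t * re ⟪x + y, w⟫_𝕜 - t ^ 2 * (‖w‖ ^ 2 + ‖(1 - p) w‖ ^ 2)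
      ≤ ‖x‖ ^ 2 + ‖y‖ ^ 2 + 2 * re ⟪p x, y⟫_𝕜 := by
  rw [hp.norm_sq_add_norm_sq_add_two_re_inner, hp.inner_eq_add_inner_one_sub (x + y) w,
    map_add (1 - p) x y, inner_add_left, map_add re, map_add re,
    hp.norm_sq_eq_add_norm_sq_one_sub w]
  have hP := two_mul_re_inner_sub_le_norm_sq (𝕜 := 𝕜) (p (x + y)) (p w) t
  have hx := two_mul_re_inner_sub_le_norm_sq (𝕜 := 𝕜) ((1 - p) x) ((1 - p) w) t
  have hy := two_mul_re_inner_sub_le_norm_sq (𝕜 := 𝕜) ((1 - p) y) ((1 - p) w) t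
  linarith

theorem apply_one_sub_apply (hp : IsStarProjection p) (x : E) : p ((1 - p) x) = 0 :=
  congrArg (· x) hp.mul_one_sub_self

theorem norm_sq_add_norm_sq_add_two_re_inner_of_eq (hp : IsStarProjection p) {t : ℝ} {x w : E}
    (hx : x = ((t / 2 : ℝ) : 𝕜) • (w + (1 - p) w)) :
    ‖x‖ ^ 2 + ‖x‖ ^ 2 + 2 * re ⟪p x, x⟫_𝕜 = t ^ 2 * (‖w‖ ^ 2 + ‖(1 - p) w‖ ^ 2) := by
  subst hx
  have hpx : p (((t / 2 : ℝ) : 𝕜) • (w + (1 - p) w) + ((t / 2 : ℝ) : 𝕜) • (w + (1 - p) w))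
      = (t : 𝕜) • p w := by
    rw [ofReal_half_smul_add_self, map_smul, map_add, hp.apply_one_sub_apply, add_zero]
  have hqx : (1 - p) (((t / 2 : ℝ) : 𝕜) • (w + (1 - p) w)) = (t : 𝕜) • (1 - p) w := by
    rw [map_smul, map_add, hp.one_sub.apply_apply, ← ofReal_half_smul_add_self t ((1 - p) w),
      smul_add]
  rw [hp.norm_sq_add_norm_sq_add_two_re_inner, hpx, hqx, norm_smul, norm_smul,
    hp.norm_sq_eq_add_norm_sq_one_sub w, norm_ofReal, mul_pow, mul_pow, sq_abs]
  ring

theorem mul_re_inner_add_self_of_eq (hp : IsStarProjection p) {t : ℝ} {x w : E}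
    (hx : x = ((t / 2 : ℝ) : 𝕜) • (w + (1 - p) w)) :
    t * re ⟪x + x, w⟫_𝕜 = t ^ 2 * (‖w‖ ^ 2 + ‖(1 - p) w‖ ^ 2) := by
  rw [hx, ofReal_half_smul_add_self, inner_smul_real_left, smul_re, inner_add_left, map_add,
    hp.one_sub.re_inner_apply_self, inner_self_eq_norm_sq]
  ring

end IsStarProjection

section BlockForm

/- With `P = Q`, `τ = τ₁`, `σ = τ₂`, `coupling` is the vector `z₀` and `diagForm` is the quadratic
form of `B` restricted to the coordinates `(x, y, v)`. -/

variable (𝕜 : Type*) {E ι κ : Type*} [RCLike 𝕜] [NormedAddCommGroup E] [InnerProductSpace 𝕜 E]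
  [Fintype ι] [Fintype κ]

def coupling (τ : ι → ℝ) (σ : κ → ℝ) (x y : ι → E) (v : κ → E) : E :=
  ∑ k, (τ k : 𝕜) • (x k + y k) + ∑ k, (σ k : 𝕜) • v k

variable {𝕜}

def diagForm (P : ι → E →L[𝕜] E) (x y : ι → E) (v : κ → E) : ℝ :=
  ∑ k, (‖x k‖ ^ 2 + ‖y k‖ ^ 2 + 2 * re ⟪P k (x k), y k⟫_𝕜) + ∑ k, ‖v k‖ ^ 2

theorem re_inner_coupling (τ : ι → ℝ) (σ : κ → ℝ) (x y : ι → E) (v : κ → E) (w : E) :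
    re ⟪coupling 𝕜 τ σ x y v, w⟫_𝕜 = ∑ k, τ k * re ⟪x k + y k, w⟫_𝕜 + ∑ k, σ k * re ⟪v k, w⟫_𝕜 := by
  simp [coupling, inner_add_left, sum_inner, inner_smul_left, mul_add]

end BlockForm

section BlockFormProjection

variable {𝕜 E ι κ : Type*} [RCLike 𝕜] [NormedAddCommGroup E] [InnerProductSpace 𝕜 E]
  [CompleteSpace E] [Fintype ι] [Fintype κ] {τ : ι → ℝ} {σ : κ → ℝ} {P : ι → E →L[𝕜] E}

theorem two_mul_re_inner_coupling_sub_le_diagForm (hP : ∀ k, IsStarProjection (P k))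
    (x y : ι → E) (v : κ → E) (w : E) :
    2 * re ⟪coupling 𝕜 τ σ x y v, w⟫_𝕜 - (∑ k, τ k ^ 2 + ∑ k, σ k ^ 2) * ‖w‖ ^ 2
        - ∑ k, τ k ^ 2 * ‖(1 - P k) w‖ ^ 2 ≤ diagForm P x y v :=
  calc
    _ = ∑ k, (2 * τ k * re ⟪x k + y k, w⟫_𝕜 - τ k ^ 2 * (‖w‖ ^ 2 + ‖(1 - P k) w‖ ^ 2))
        + ∑ k, (2 * σ k * re ⟪v k, w⟫_𝕜 - σ k ^ 2 * ‖w‖ ^ 2) := by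
      simp only [re_inner_coupling, sum_sub_distrib, mul_add, sum_add_distrib, mul_sum, ← sum_mul,
        mul_assoc]
      ring
    _ ≤ diagForm P x y v :=
      add_le_add (sum_le_sum fun k _ => (hP k).two_mul_re_inner_sub_le (τ k) (x k) (y k) w)
        (sum_le_sum fun k _ => two_mul_re_inner_sub_le_norm_sq (v k) w (σ k))

theorem diagForm_eq_of_eq (hP : ∀ k, IsStarProjection (P k)) {x : ι → E} {v : κ → E} {w : E}
    (hx : ∀ k, x k = ((τ k / 2 : ℝ) : 𝕜) • (w + (1 - P k) w)) (hv : ∀ k, v k = (σ k : 𝕜) • w) :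
    diagForm P x x v = (∑ k, τ k ^ 2 + ∑ k, σ k ^ 2) * ‖w‖ ^ 2
      + ∑ k, τ k ^ 2 * ‖(1 - P k) w‖ ^ 2 := by
  simp only [diagForm, fun k => (hP k).norm_sq_add_norm_sq_add_two_re_inner_of_eq (hx k), hv,
    norm_smul, norm_ofReal, mul_pow, sq_abs, mul_add, sum_add_distrib, ← sum_mul]
  ring

theorem re_inner_coupling_eq_of_eq (hP : ∀ k, IsStarProjection (P k)) {x : ι → E} {v : κ → E}
    {w : E} (hx : ∀ k, x k = ((τ k / 2 : ℝ) : 𝕜) • (w + (1 - P k) w))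
    (hv : ∀ k, v k = (σ k : 𝕜) • w) :
    re ⟪coupling 𝕜 τ σ x x v, w⟫_𝕜 = (∑ k, τ k ^ 2 + ∑ k, σ k ^ 2) * ‖w‖ ^ 2
      + ∑ k, τ k ^ 2 * ‖(1 - P k) w‖ ^ 2 := by
  simp only [re_inner_coupling, fun k => (hP k).mul_re_inner_add_self_of_eq (hx k), hv,
    inner_smul_real_left, smul_re, inner_self_eq_norm_sq, ← mul_assoc, ← sq, mul_add,
    sum_add_distrib, ← sum_mul]
  ring

theorem forall_norm_sq_coupling_le_diagForm_iff (hP : ∀ k, IsStarProjection (P k)) :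
    (∀ x y v, ‖coupling 𝕜 τ σ x y v‖ ^ 2 ≤ diagForm P x y v) ↔
      ∀ w, ∑ k, τ k ^ 2 * ‖(1 - P k) w‖ ^ 2 ≤ (1 - (∑ k, τ k ^ 2 + ∑ k, σ k ^ 2)) * ‖w‖ ^ 2 := by
  constructor
  · intro h w
    let x : ι → E := fun k => ((τ k / 2 : ℝ) : 𝕜) • (w + (1 - P k) w)
    let v : κ → E := fun k => (σ k : 𝕜) • w
    have hdiag := diagForm_eq_of_eq hP (x := x) (v := v) (fun _ => rfl) (fun _ => rfl)
    have hre := re_inner_coupling_eq_of_eq hP (x := x) (v := v) (fun _ => rfl) (fun _ => rfl)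
    have := re_inner_le_norm_sq_of_norm_sq_le_re_inner ((h x x v).trans (hdiag.trans hre.symm).le)
    linarith
  · intro h x y v
    set u := coupling 𝕜 τ σ x y v
    have := two_mul_re_inner_coupling_sub_le_diagForm (τ := τ) (σ := σ) hP x y v u
    rw [inner_self_eq_norm_sq] at this
    linarith [h u]

end BlockFormProjection

theorem stmt8_general {H₀ : Type*} [NormedAddCommGroup H₀] [InnerProductSpace ℂ H₀] [CompleteSpace H₀]
    (m r : ℕ)
    (τ₁ : Fin m → ℝ) (τ₂ : Fin r → ℝ)
    (Q : Fin m → H₀ →L[ℂ] H₀)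
    (hsa : ∀ k, IsSelfAdjoint (Q k)) (hid : ∀ k, Q k ∘L Q k = Q k) :
    (∀ (z : H₀) (x y : Fin m → H₀) (v : Fin r → H₀),
        0 ≤ ‖z‖ ^ 2
          + 2 * ((inner ℂ z (∑ k, (τ₁ k : ℂ) • (x k + y k) + ∑ k, (τ₂ k : ℂ) • v k) : ℂ)).re
          + ∑ k, (‖x k‖ ^ 2 + ‖y k‖ ^ 2 + 2 * ((inner ℂ ((Q k) (x k)) (y k) : ℂ)).re)
          + ∑ k, ‖v k‖ ^ 2) ↔
    (∀ w : H₀,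
        ∑ k, (τ₁ k) ^ 2 * ((inner ℂ ((ContinuousLinearMap.id ℂ H₀ - Q k) w) w : ℂ)).re
          ≤ (1 - (∑ k, (τ₁ k) ^ 2 + ∑ k, (τ₂ k) ^ 2)) * ‖w‖ ^ 2) := by
  have hQ : ∀ k, IsStarProjection (Q k) := fun k => ⟨hid k, hsa k⟩
  have hR : ∀ k w, ((inner ℂ ((ContinuousLinearMap.id ℂ H₀ - Q k) w) w : ℂ)).re
      = ‖(1 - Q k) w‖ ^ 2 := fun k => (hQ k).one_sub.re_inner_apply_self
  simp only [hR]
  refine Iff.trans ?_ (forall_norm_sq_coupling_le_diagForm_iff hQ)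
  simp only [← forall_norm_sq_add_two_re_inner_add_nonneg_iff (𝕜 := ℂ), coupling, diagForm,
    add_assoc, re_to_complex]
  exact ⟨fun h x y v z => h z x y v, fun h z x y v => h x y v z⟩

/-- The block operator B(Q₁,…,Q_m) is nonnegative (its quadratic form is ≥ 0) iff
Σ τ_k² R_k ≤ ξ(τ) I, where R_k = I − Q_k and ξ(τ) = 1 − Σ τ_k². -/
theorem stmt8 {H₀ : Type*} [NormedAddCommGroup H₀] [InnerProductSpace ℂ H₀] [CompleteSpace H₀]
    (m r : ℕ) (hmr : 1 ≤ m + r)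
    (τ₁ : Fin m → ℝ) (τ₂ : Fin r → ℝ)
    (hτ₁ : ∀ k, τ₁ k ∈ Set.Ioo (0 : ℝ) 1) (hτ₂ : ∀ k, τ₂ k ∈ Set.Ioo (0 : ℝ) 1)
    (Q : Fin m → H₀ →L[ℂ] H₀)
    (hsa : ∀ k, IsSelfAdjoint (Q k)) (hid : ∀ k, Q k ∘L Q k = Q k) :
    (∀ (z : H₀) (x y : Fin m → H₀) (v : Fin r → H₀),
        0 ≤ ‖z‖ ^ 2
          + 2 * ((inner ℂ z (∑ k, (τ₁ k : ℂ) • (x k + y k) + ∑ k, (τ₂ k : ℂ) • v k) : ℂ)).re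
          + ∑ k, (‖x k‖ ^ 2 + ‖y k‖ ^ 2 + 2 * ((inner ℂ ((Q k) (x k)) (y k) : ℂ)).re)
          + ∑ k, ‖v k‖ ^ 2) ↔
    (∀ w : H₀,
        ∑ k, (τ₁ k) ^ 2 * ((inner ℂ ((ContinuousLinearMap.id ℂ H₀ - Q k) w) w : ℂ)).re
          ≤ (1 - (∑ k, (τ₁ k) ^ 2 + ∑ k, (τ₂ k) ^ 2)) * ‖w‖ ^ 2) :=
  stmt8_general m r τ₁ τ₂ Q hsa hid
end
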